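/- arXiv:math/0610890 — 2 statements merged into one kernel-verified Lean document; each statement's English description precedes it below -/
import Mathlib

section
/- The moments of the Bergman-like shift B₊^{(2)} (weights aₙ = √(2 − 1/(n+2))) satisfy γₙ := ∏_{j=0}^{n-1}(2 − 1/(j+2)) = ∫₀² sⁿ · s/(π·√(2s − s²)) ds for all n ≥ 0; that is, the measure dξ₂(s) = s ds/(π√(2s−s²)) on [0,2] is a Berger measure for B₊^{(2)}. -/
/-!
Writing `w(s) = √(2s - s²)`, the claim is `∫₀² s^(n+1) / w = π γₙ`. For `n = 0` this is the
fundamental theorem of calculus for `arcsin (s - 1) - w(s)`, whose derivative is `s / w(s)`.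
Since `(s^(n+1) w)' = ((2n+3) s^(n+1) - (n+2) s^(n+2)) / w` and `w` vanishes at `0` and `2`,
the integrals satisfy `(n+2) I(n+1) = (2n+3) I(n)`, which is the recursion
`γₙ₊₁ = γₙ (2 - 1/(n+2))` of the moments. Integrability needs no estimate: `s / w(s)` is a
nonnegative derivative.
-/

open MeasureTheory Finset Set Real intervalIntegral

lemma hasDerivAt_sqrt_two_mul_sub_sq {x : ℝ} (hx0 : 0 < x) (hx2 : x < 2) :
    HasDerivAt (fun s : ℝ => √(2 * s - s ^ 2)) ((1 - x) / √(2 * x - x ^ 2)) x := by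
  have hpos : 0 < 2 * x - x ^ 2 := by nlinarith
  refine ((((hasDerivAt_id' x).const_mul 2).sub (hasDerivAt_pow 2 x)).sqrt hpos.ne').congr_deriv ?_
  simp only [Pi.sub_apply]
  field_simp
  ring

lemma hasDerivAt_arcsin_sub_one_sub_sqrt {x : ℝ} (hx0 : 0 < x) (hx2 : x < 2) :
    HasDerivAt (fun s : ℝ => arcsin (s - 1) - √(2 * s - s ^ 2)) (x / √(2 * x - x ^ 2)) x := by
  have harcsin := (hasDerivAt_arcsin (by linarith : x - 1 ≠ -1) (by linarith : x - 1 ≠ 1)).comp x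
    ((hasDerivAt_id' x).sub_const 1)
  refine (harcsin.sub (hasDerivAt_sqrt_two_mul_sub_sq hx0 hx2)).congr_deriv ?_
  rw [show (1 : ℝ) - (x - 1) ^ 2 = 2 * x - x ^ 2 by ring]
  ring

lemma intervalIntegrable_div_sqrt_two_mul_sub_sq :
    IntervalIntegrable (fun s : ℝ => s / √(2 * s - s ^ 2)) volume 0 2 := by
  refine intervalIntegrable_deriv_of_nonneg (g := fun s => arcsin (s - 1) - √(2 * s - s ^ 2))
    (by fun_prop) ?_ ?_
  all_goals
    rw [min_eq_left zero_le_two, max_eq_right zero_le_two]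
    rintro x ⟨hx0, hx2⟩
  · exact hasDerivAt_arcsin_sub_one_sub_sqrt hx0 hx2
  · positivity

lemma intervalIntegrable_pow_succ_div_sqrt_two_mul_sub_sq (m : ℕ) :
    IntervalIntegrable (fun s : ℝ => s ^ (m + 1) / √(2 * s - s ^ 2)) volume 0 2 := by
  simpa only [pow_succ, mul_div_assoc] using
    intervalIntegrable_div_sqrt_two_mul_sub_sq.continuousOn_mul (continuous_pow m).continuousOn

lemma integral_div_sqrt_two_mul_sub_sq : ∫ s in (0 : ℝ)..2, s / √(2 * s - s ^ 2) = π := by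
  rw [integral_eq_sub_of_hasDerivAt_of_le zero_le_two (by fun_prop)
    (fun x hx => hasDerivAt_arcsin_sub_one_sub_sqrt hx.1 hx.2)
    intervalIntegrable_div_sqrt_two_mul_sub_sq]
  norm_num

lemma hasDerivAt_pow_succ_mul_sqrt_two_mul_sub_sq (n : ℕ) {x : ℝ} (hx0 : 0 < x) (hx2 : x < 2) :
    HasDerivAt (fun s : ℝ => s ^ (n + 1) * √(2 * s - s ^ 2))
      ((2 * n + 3) * (x ^ (n + 1) / √(2 * x - x ^ 2))
        - (n + 2) * (x ^ (n + 2) / √(2 * x - x ^ 2))) x := by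
  have hsq : √(2 * x - x ^ 2) ^ 2 = 2 * x - x ^ 2 := sq_sqrt (by nlinarith)
  have hpos : 0 < √(2 * x - x ^ 2) := sqrt_pos.2 (by nlinarith)
  refine ((hasDerivAt_pow (n + 1) x).mul (hasDerivAt_sqrt_two_mul_sub_sq hx0 hx2)).congr_deriv ?_
  rw [Nat.add_sub_cancel]
  generalize √(2 * x - x ^ 2) = S at hsq hpos ⊢
  field_simp
  push_cast
  linear_combination (n + 1) * x ^ n * hsq

lemma integral_pow_succ_succ_div_sqrt_two_mul_sub_sq (n : ℕ) :
    (n + 2) * ∫ s in (0 : ℝ)..2, s ^ (n + 2) / √(2 * s - s ^ 2)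
      = (2 * n + 3) * ∫ s in (0 : ℝ)..2, s ^ (n + 1) / √(2 * s - s ^ 2) := by
  have hint₁ := (intervalIntegrable_pow_succ_div_sqrt_two_mul_sub_sq n).const_mul (2 * n + 3 : ℝ)
  have hint₂ : IntervalIntegrable (fun s : ℝ => (n + 2) * (s ^ (n + 2) / √(2 * s - s ^ 2)))
      volume 0 2 :=
    (intervalIntegrable_pow_succ_div_sqrt_two_mul_sub_sq (n + 1)).const_mul _
  have hftc := integral_eq_sub_of_hasDerivAt_of_le zero_le_two (by fun_prop)
    (fun x hx => hasDerivAt_pow_succ_mul_sqrt_two_mul_sub_sq n hx.1 hx.2) (hint₁.sub hint₂)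
  rw [integral_sub hint₁ hint₂, intervalIntegral.integral_const_mul,
    intervalIntegral.integral_const_mul] at hftc
  norm_num at hftc
  linarith

lemma integral_pow_succ_div_sqrt_two_mul_sub_sq (n : ℕ) :
    ∫ s in (0 : ℝ)..2, s ^ (n + 1) / √(2 * s - s ^ 2)
      = π * ∏ j ∈ range n, (2 - 1 / ((j : ℝ) + 2)) := by
  induction n with
  | zero => simpa using integral_div_sqrt_two_mul_sub_sq
  | succ n ih =>
    have hrec := integral_pow_succ_succ_div_sqrt_two_mul_sub_sq n
    rw [ih] at hrec
    refine mul_left_cancel₀ (by positivity : (n : ℝ) + 2 ≠ 0) (hrec.trans ?_)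
    rw [prod_range_succ]
    field_simp
    ring

theorem stmt5 (n : ℕ) :
    (∏ j ∈ Finset.range n, ((2 : ℝ) - 1 / ((j : ℝ) + 2)))
      = ∫ s in Set.Icc (0 : ℝ) 2, s ^ n * (s / (Real.pi * Real.sqrt (2 * s - s ^ 2))) := by
  have hdensity : ∀ s : ℝ, s ^ n * (s / (π * √(2 * s - s ^ 2)))
      = π⁻¹ * (s ^ (n + 1) / √(2 * s - s ^ 2)) := fun s => by
    rw [div_mul_eq_div_div_swap, pow_succ]
    ring
  simp_rw [hdensity]
  rw [integral_Icc_eq_integral_Ioc, ← integral_of_le zero_le_two,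
    intervalIntegral.integral_const_mul, integral_pow_succ_div_sqrt_two_mul_sub_sq,
    inv_mul_cancel_left₀ pi_ne_zero]
end

section
/- Let 0 < α < β ≤ 1, and consider the 2-variable weight diagram with horizontal weights α₍ᵢ,ⱼ₎ = αʲ (independent of i) and vertical weights β₍ᵢ,ⱼ₎ = αⁱ·β (independent of j). The commutativity condition α₍ᵢ,ⱼ₊₁₎·β₍ᵢ,ⱼ₎ = β₍ᵢ₊₁,ⱼ₎·α₍ᵢ,ⱼ₎ holds, but the pair (T₁,T₂) is not jointly hyponormal: the 2×2 matrix M with entries M₁₁ = α₀₀² (α₁₀² − α₀₀²), M₂₂ = β₀₀²(β₀₁² − β₀₀²), M₁₂ = M₂₁ = α₀₀β₀₀(α₀₁β₁₀ − α₀₀β₀₀), evaluated with α₀₀ = α₁₀ = 1, α₀₁ = α, β₀₀ = β, β₀₁ = αβ, β₁₀ = αβ, is not positive semidefinite. -/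
theorem stmt9 (α β : ℝ) (h0 : 0 < α) (hαβ : α < β) (hβ1 : β ≤ 1)
    (αw βw : ℕ → ℕ → ℝ)
    (hαw : ∀ i j : ℕ, αw i j = α ^ j)
    (hβw : ∀ i j : ℕ, βw i j = α ^ i * β) :
    (∀ i j : ℕ, αw i (j + 1) * βw i j = βw (i + 1) j * αw i j) ∧
    ¬ Matrix.PosSemidef
        (!![(1 : ℝ) ^ 2 * ((1 : ℝ) ^ 2 - (1 : ℝ) ^ 2),
            1 * β * (α * (α * β) - 1 * β);
            1 * β * (α * (α * β) - 1 * β),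
            β ^ 2 * ((α * β) ^ 2 - β ^ 2)]) := by
  constructor
  · intro i j
    simp only [hαw, hβw]
    ring
  · intro h
    have hβ0 : 0 < β := lt_trans h0 hαβ
    have hα1 : α < 1 := lt_of_lt_of_le hαβ hβ1
    set c : ℝ := 1 * β * (α * (α * β) - 1 * β) with hc
    set d : ℝ := β ^ 2 * ((α * β) ^ 2 - β ^ 2) with hd
    have hcneg : c < 0 := by
      have hα2 : α ^ 2 < 1 := by nlinarith
      rw [hc]; nlinarith [mul_pos hβ0 hβ0]
    set t : ℝ := (d + 1) / (-(2 * c)) with ht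
    have htc : (2 * c) * t = -(d + 1) := by
      have h2c : -(2 * c) ≠ 0 := by intro hh; nlinarith
      rw [ht, mul_comm, div_mul_eq_mul_div, div_eq_iff h2c]; ring
    have hq := h.dotProduct_mulVec_nonneg ![t, 1]
    simp [Matrix.mulVec, dotProduct, Fin.sum_univ_two] at hq
    nlinarith [hq, htc]
end
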